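/- arXiv:1702.08599 — 2 statements merged into one kernel-verified Lean document; each statement's English description precedes it below -/
import Mathlib

section
/- Let p be a prime, let n ≥ 2 be an integer, and let N be a positive integer with p | N. Then Z_n(N,p) = (n!/N) · Σ 1/(u_1 u_2 ⋯ u_{n−1}), where the sum runs over all integers 1 ≤ u_1 < u_2 < ⋯ < u_{n−1} < N such that u_1, u_2 − u_1, …, u_{n−1} − u_{n−2}, and u_{n−1} all lie in 𝒫_p. -/
open Finset

attribute [local instance] Classical.propDecidable

/-- `x ≡ y (mod p^s)` for rational numbers `x, y`: the `p`-adic valuation of `x - y`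
is at least `s` (where the valuation of `0` is regarded as `+∞`). -/
def padicCong (p s : ℕ) (x y : ℚ) : Prop :=
  x = y ∨ (s : ℤ) ≤ padicValRat p (x - y)

/-- `Z_n(N,p)`: the sum of `1/(l₁⋯lₙ)` over all ordered `n`-tuples `(l₁,…,lₙ)` of
positive integers not divisible by `p` with `l₁+⋯+lₙ = N`. -/
noncomputable def Zsum (p n N : ℕ) : ℚ :=
  ∑ l ∈ (Finset.Nat.antidiagonalTuple n N).filter
      (fun l => ∀ i, 0 < l i ∧ ¬ p ∣ l i),
    ∏ i, (l i : ℚ)⁻¹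

/-- `S_n^{(m)}(p^r)`: the sum of `1/(l₁⋯lₙ)` over all ordered `n`-tuples `(l₁,…,lₙ)` of
positive integers not divisible by `p`, each `< p^r`, with `l₁+⋯+lₙ = m·p^r`. -/
noncomputable def Ssum (p n m r : ℕ) : ℚ :=
  ∑ l ∈ (Finset.Nat.antidiagonalTuple n (m * p ^ r)).filter
      (fun l => ∀ i, (0 < l i ∧ ¬ p ∣ l i) ∧ l i < p ^ r),
    ∏ i, (l i : ℚ)⁻¹

/-- `σ_n^{(b)}(N,p)`: the sum of `(-1)^(l₁+⋯+l_b)/(l₁⋯lₙ)` over all ordered `n`-tuples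
`(l₁,…,lₙ)` of positive integers not divisible by `p` with `l₁+⋯+lₙ = N`. -/
noncomputable def sigmaSum (p n b N : ℕ) : ℚ :=
  ∑ l ∈ (Finset.Nat.antidiagonalTuple n N).filter
      (fun l => ∀ i, 0 < l i ∧ ¬ p ∣ l i),
    (-1 : ℚ) ^ (∑ i ∈ univ.filter (fun i : Fin n => (i : ℕ) < b), l i) *
      ∏ i, (l i : ℚ)⁻¹

/-- The value of a finite tuple at position `j`, extended by `0`. -/
noncomputable def seqAt {k : ℕ} (u : Fin k → ℕ) (j : ℕ) : ℕ :=
  if h : j < k then u ⟨j, h⟩ else 0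

/-- The chain `i₁, i₂, …, i_d, l₁+⋯+l_a` (indexed from `0`): position `j < d` gives
`i_{j+1}` and position `d` (or beyond) gives `l₁+⋯+l_a`. -/
noncomputable def Fchain {d a : ℕ} (i : Fin d → ℕ) (l : Fin a → ℕ) : ℕ → ℕ :=
  fun j => if h : j < d then i ⟨j, h⟩ else ∑ k, l k

/-- The summation conditions for `F_a^{(b)}(s,N,p)`:
`N > i₁ > ⋯ > i_d > l₁+⋯+l_a`, each `l_k ∈ 𝒫_p`, and
`i₁, i₁-i₂, …, i_{d-1}-i_d, i_d-(l₁+⋯+l_a) ∈ 𝒫_p`.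
(When `d = 0` this reduces to `l₁+⋯+l_a < N` and each `l_k ∈ 𝒫_p`.) -/
def FCond (p : ℕ) {d a : ℕ} (i : Fin d → ℕ) (l : Fin a → ℕ) (N : ℕ) : Prop :=
  (∀ k, 0 < l k ∧ ¬ p ∣ l k) ∧
  Fchain i l 0 < N ∧
  (0 < d → 0 < Fchain i l 0 ∧ ¬ p ∣ Fchain i l 0) ∧
  ∀ j < d, Fchain i l (j + 1) < Fchain i l j ∧
    0 < Fchain i l j - Fchain i l (j + 1) ∧ ¬ p ∣ (Fchain i l j - Fchain i l (j + 1))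

/-- `F_a^{(b)}(s,N,p)` where `s = (s₁,…,s_d)` is a vector of signs. -/
noncomputable def Fsum (p a b : ℕ) {d : ℕ} (s : Fin d → ℤ) (N : ℕ) : ℚ :=
  ∑ il ∈ ((Fintype.piFinset fun _ : Fin d => Finset.range N) ×ˢ
          (Fintype.piFinset fun _ : Fin a => Finset.range N)).filter
      (fun il => FCond p il.1 il.2 N),
    (∏ j, (s j : ℚ) ^ il.1 j) *
      (-1 : ℚ) ^ (∑ k ∈ univ.filter (fun k : Fin a => (k : ℕ) < b), il.2 k) /
      ((∏ j, (il.1 j : ℚ)) * ∏ k, (il.2 k : ℚ))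

/-- `A_s`: the total size of the odd-indexed blocks in the decomposition
`s = (X_{w₁}, Z_{w₂}, …, Z_{w_l})`; equivalently, the number of positions `j` such that
the number of `-1`-entries among `s₁,…,s_j` is even. -/
noncomputable def Acount {d : ℕ} (s : Fin d → ℤ) : ℕ :=
  (univ.filter fun j : Fin d =>
    Even (univ.filter (fun k : Fin d => k ≤ j ∧ s k = -1)).card).card

/-- `B_s`: the total size of the even-indexed blocks in the decomposition
`s = (X_{w₁}, Z_{w₂}, …, Z_{w_l})`; equivalently, the number of positions `j` such that
the number of `-1`-entries among `s₁,…,s_j` is odd. -/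
noncomputable def Bcount {d : ℕ} (s : Fin d → ℤ) : ℕ :=
  (univ.filter fun j : Fin d =>
    Odd (univ.filter (fun k : Fin d => k ≤ j ∧ s k = -1)).card).card

/-- `len(W_s)`: the number of blocks, namely `1` plus the number of `-1`-entries of `s`. -/
noncomputable def lenW {d : ℕ} (s : Fin d → ℤ) : ℕ :=
  1 + (univ.filter fun k : Fin d => s k = -1).card

/-- `P_s` (for given `a ≥ b`): `a - b - A_s` if `len(W_s)` is even, `b - B_s` if odd.
For `s = ∅` this gives `P_∅ = b`. -/
noncomputable def Pval (a b : ℕ) {d : ℕ} (s : Fin d → ℤ) : ℕ :=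
  if 2 ∣ lenW s then a - b - Acount s else b - Bcount s

/-- `C_{a,b}(A,B)`, defined via falling factorials `(x)_γ = x(x-1)⋯(x-γ+1)`. -/
def Cab (a b A B : ℕ) : ℚ :=
  if A = 0 ∧ B = 0 then 1
  else if A = 0 then (b.descFactorial B : ℚ)
  else if B = 0 then ((a - b).descFactorial A : ℚ)
  else ((a - b).descFactorial A : ℚ) * (b.descFactorial B : ℚ)

/-!
For positive `x₁, …, xₙ`, `∑_σ ∏_j 1/(x_{σ 1} + ⋯ + x_{σ j}) = ∏_i 1/xᵢ`: the factor `j = n` is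
`1/(x₁ + ⋯ + xₙ)` for every `σ`, and grouping the permutations by `σ n = i` the rest contributes
`xᵢ ∏ 1/x` by induction. The compositions of `N` with parts in `𝒫_p` are permuted among themselves,
so `Z_n(N,p) = n! ∑_l ∏_j 1/(l₁ + ⋯ + l_j)`, whose factor `j = n` is `1/N`. The remaining partial
sums `u_j = l₁ + ⋯ + l_j` run exactly over the chains `0 < u₁ < ⋯ < u_{n-1} < N` with all gaps in
`𝒫_p`, and since `p ∣ N` the last gap `N - u_{n-1}` lies in `𝒫_p` iff `u_{n-1}` does.
-/

open Equiv

theorem Fin.partialSum_last {M : Type*} [AddCommMonoid M] {n : ℕ} (f : Fin n → M) :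
    Fin.partialSum f (Fin.last n) = ∑ i, f i := by
  simp [Fin.partialSum, List.take_of_length_le, List.sum_ofFn]

theorem Fin.prod_inv_partialSum_succ {K : Type*} [Semifield K] {n : ℕ} (g : Fin (n + 1) → K) :
    ∏ j : Fin (n + 1), (Fin.partialSum g j.succ)⁻¹ =
      (∏ j : Fin n, (Fin.partialSum (Fin.init g) j.succ)⁻¹) * (∑ i, g i)⁻¹ := by
  rw [Fin.prod_univ_castSucc, Fin.succ_last, Fin.partialSum_last]
  simp [Fin.partialSum_init]

theorem Nat.cast_partialSum {R : Type*} [AddMonoidWithOne R] {n : ℕ} (f : Fin n → ℕ)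
    (i : Fin (n + 1)) : ((Fin.partialSum f i : ℕ) : R) = Fin.partialSum (fun j => (f j : R)) i := by
  simp [Fin.partialSum, Nat.cast_list_sum, List.map_take, List.map_ofFn, Function.comp_def]

theorem Fin.partialSum_strictMono {M : Type*} [AddCommMonoid M] [PartialOrder M]
    [IsOrderedCancelAddMonoid M] {n : ℕ} {f : Fin n → M} (hf : ∀ i, 0 < f i) :
    StrictMono (Fin.partialSum f) :=
  Fin.strictMono_iff_lt_succ.2 fun i => by
    rw [Fin.partialSum_succ]; exact lt_add_of_pos_right _ (hf i)

theorem Finset.sum_comp_perm_of_forall_comp_mem {α M : Type*} [AddCommMonoid M] {n : ℕ}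
    {S : Finset (Fin n → α)} (hS : ∀ σ : Perm (Fin n), ∀ l ∈ S, l ∘ σ ∈ S)
    (g : (Fin n → α) → M) (σ : Perm (Fin n)) :
    ∑ l ∈ S, g (l ∘ σ) = ∑ l ∈ S, g l :=
  Finset.sum_nbij' (· ∘ σ) (· ∘ ⇑σ⁻¹) (fun l hl => hS σ l hl) (fun l hl => hS σ⁻¹ l hl)
    (fun l _ => by ext; simp) (fun l _ => by ext; simp) (fun _ _ => rfl)

section
variable {K : Type*} [Semifield K] [LinearOrder K] [IsStrictOrderedRing K]

theorem sum_perm_prod_inv_partialSum {n : ℕ} (f : Fin n → K) (hf : ∀ i, 0 < f i) :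
    ∑ σ : Perm (Fin n), ∏ j : Fin n, (Fin.partialSum (f ∘ σ) j.succ)⁻¹ = ∏ i, (f i)⁻¹ := by
  induction n with
  | zero => simp
  | succ n ih =>
    -- `D (i, ·)` enumerates the permutations sending the last index to `i`.
    set D : Fin (n + 1) × Perm (Fin n) ≃ Perm (Fin (n + 1)) :=
      Perm.decomposeFin.symm.trans (Equiv.mulRight Fin.revPerm)
    have hD : ∀ i e k, D (i, e) (Fin.castSucc k) = swap 0 i (e k.rev).succ := by
      intro i e k
      simp [D, Fin.rev_castSucc]
    have hrest : ∀ i, ∑ e : Perm (Fin n), ∏ j : Fin n,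
        (Fin.partialSum (Fin.init (f ∘ D (i, e))) j.succ)⁻¹ = f i * ∏ y, (f y)⁻¹ := by
      intro i
      set g : Fin n → K := fun x => f (swap 0 i x.succ)
      have hinit : ∀ e, Fin.init (f ∘ D (i, e)) = g ∘ ⇑(e * Fin.revPerm : Perm (Fin n)) := by
        intro e; funext k; simp [Fin.init, hD, g]
      simp_rw [hinit]
      calc ∑ e : Perm (Fin n), ∏ j : Fin n,
            (Fin.partialSum (g ∘ ⇑(e * Fin.revPerm : Perm (Fin n))) j.succ)⁻¹
          = ∑ e : Perm (Fin n), ∏ j : Fin n, (Fin.partialSum (g ∘ e) j.succ)⁻¹ :=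
            Fintype.sum_equiv (Equiv.mulRight Fin.revPerm) _ _
              (fun e => by simp only [Equiv.coe_mulRight])
        _ = ∏ x, (g x)⁻¹ := ih g (fun x => hf _)
        _ = f i * ∏ y, (f y)⁻¹ := by
            have := Fin.prod_univ_succ (fun y => (f (swap 0 i y))⁻¹)
            rw [Equiv.prod_comp (swap 0 i) (fun y => (f y)⁻¹), swap_apply_left] at this
            rw [this, mul_inv_cancel_left₀ (hf i).ne']
    have htotal : ∀ σ : Perm (Fin (n + 1)), ∑ i, (f ∘ σ) i = ∑ i, f i := fun σ => Equiv.sum_comp σ f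
    have hpos : 0 < ∑ i, f i := Finset.sum_pos (fun i _ => hf i) univ_nonempty
    rw [← D.sum_comp, Fintype.sum_prod_type]
    simp_rw [Fin.prod_inv_partialSum_succ, htotal, ← Finset.sum_mul, hrest, ← Finset.sum_mul]
    rw [mul_comm, ← mul_assoc, inv_mul_cancel₀ hpos.ne', one_mul]

theorem sum_prod_inv_eq_factorial_mul_sum_prod_inv_partialSum {n : ℕ} {S : Finset (Fin n → ℕ)}
    (hS : ∀ σ : Perm (Fin n), ∀ l ∈ S, l ∘ σ ∈ S) (hpos : ∀ l ∈ S, ∀ i, 0 < l i) :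
    ∑ l ∈ S, ∏ i, ((l i : K))⁻¹ =
      n.factorial * ∑ l ∈ S, ∏ j : Fin n, (Fin.partialSum (fun i => (l i : K)) j.succ)⁻¹ := by
  set g : (Fin n → ℕ) → K := fun l => ∏ j : Fin n, (Fin.partialSum (fun i => (l i : K)) j.succ)⁻¹
  calc ∑ l ∈ S, ∏ i, ((l i : K))⁻¹
      = ∑ σ : Perm (Fin n), ∑ l ∈ S, g (l ∘ σ) := by
        rw [Finset.sum_comm]
        exact Finset.sum_congr rfl fun l hl =>
          (sum_perm_prod_inv_partialSum _ fun i => Nat.cast_pos.2 (hpos l hl i)).symm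
    _ = ∑ _σ : Perm (Fin n), ∑ l ∈ S, g l := by
        simp_rw [Finset.sum_comp_perm_of_forall_comp_mem hS g]
    _ = n.factorial * ∑ l ∈ S, g l := by
        rw [Finset.sum_const, Finset.card_univ, Fintype.card_perm, Fintype.card_fin, nsmul_eq_mul]

theorem sum_prod_inv_eq_factorial_div_mul_sum_prod_inv_partialSum_init {n N : ℕ}
    {S : Finset (Fin (n + 1) → ℕ)} (hS : ∀ σ : Perm (Fin (n + 1)), ∀ l ∈ S, l ∘ σ ∈ S)
    (hpos : ∀ l ∈ S, ∀ i, 0 < l i) (hsum : ∀ l ∈ S, ∑ i, l i = N) :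
    ∑ l ∈ S, ∏ i, ((l i : K))⁻¹ =
      ((n + 1).factorial : K) / N *
        ∑ l ∈ S, ∏ j : Fin n, ((Fin.partialSum (Fin.init l) j.succ : ℕ) : K)⁻¹ := by
  rw [sum_prod_inv_eq_factorial_mul_sum_prod_inv_partialSum hS hpos, div_eq_mul_inv, mul_assoc]
  congr 1
  rw [Finset.mul_sum]
  refine Finset.sum_congr rfl fun l hl => ?_
  rw [Fin.prod_inv_partialSum_succ, mul_comm, ← Nat.cast_sum, hsum l hl]
  simp only [Nat.cast_partialSum]
  rfl

end

/-- The lengths of the intervals cut out by `0, u₀, …, u_{m-1}, N`. -/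
def chainGaps {m : ℕ} (N : ℕ) (u : Fin m → ℕ) : Fin (m + 1) → ℕ :=
  fun k => Fin.snoc (α := fun _ => ℕ) u N k - Fin.cons (α := fun _ => ℕ) 0 u k

theorem partialSum_chainGaps_succ {m N : ℕ} {u : Fin m → ℕ} (h : ∀ k, 0 < chainGaps N u k)
    (k : Fin (m + 1)) :
    Fin.partialSum (chainGaps N u) k.succ = Fin.snoc (α := fun _ => ℕ) u N k := by
  induction k using Fin.induction with
  | zero =>
    rw [Fin.partialSum_succ]
    simp [chainGaps]
  | succ k ih =>
    have hk := h k.succ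
    rw [Fin.partialSum_succ, ← Fin.succ_castSucc, ih]
    simp only [chainGaps, Fin.snoc_castSucc, Fin.cons_succ] at hk ⊢
    omega

theorem chainGaps_partialSum_init {m : ℕ} (l : Fin (m + 1) → ℕ) :
    chainGaps (∑ i, l i) (fun j => Fin.partialSum (Fin.init l) j.succ) = l := by
  funext k
  have hsnoc : Fin.snoc (α := fun _ => ℕ) (fun j => Fin.partialSum (Fin.init l) j.succ) (∑ i, l i) k
      = Fin.partialSum l k.succ := by
    induction k using Fin.lastCases with
    | last => simp [Fin.partialSum_last]
    | cast j => simp [Fin.partialSum_init]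
  have hcons : Fin.cons (α := fun _ => ℕ) 0 (fun j => Fin.partialSum (Fin.init l) j.succ) k
      = Fin.partialSum l k.castSucc := by
    induction k using Fin.cases with
    | zero => simp
    | succ j => simp [Fin.partialSum_init]
  rw [chainGaps, hsnoc, hcons, Fin.partialSum_succ, add_tsub_cancel_left]

theorem sum_partialSum_init_eq_sum_chainGaps {M : Type*} [AddCommMonoid M] (P : ℕ → Prop)
    [DecidablePred P] (m N : ℕ) (g : (Fin m → ℕ) → M) :
    ∑ l ∈ (Finset.Nat.antidiagonalTuple (m + 1) N).filter (fun l => ∀ i, 0 < l i ∧ P (l i)),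
        g (fun j => Fin.partialSum (Fin.init l) j.succ) =
      ∑ u ∈ (Fintype.piFinset fun _ : Fin m => Finset.range N).filter
          (fun u => ∀ k, 0 < chainGaps N u k ∧ P (chainGaps N u k)), g u := by
  refine Finset.sum_nbij' (fun l j => Fin.partialSum (Fin.init l) j.succ) (chainGaps N)
    ?_ ?_ ?_ ?_ fun _ _ => rfl
  · intro l hl
    simp only [Finset.mem_filter, Finset.Nat.mem_antidiagonalTuple] at hl ⊢
    obtain ⟨rfl, hl⟩ := hl
    refine ⟨Fintype.mem_piFinset.2 fun j => Finset.mem_range.2 ?_,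
      by rwa [chainGaps_partialSum_init]⟩
    rw [Fin.partialSum_init, ← Fin.partialSum_last]
    exact Fin.partialSum_strictMono (fun i => (hl i).1) (Fin.castSucc_lt_last _)
  · intro u hu
    simp only [Finset.mem_filter, Finset.Nat.mem_antidiagonalTuple] at hu ⊢
    refine ⟨?_, hu.2⟩
    rw [← Fin.partialSum_last, ← Fin.succ_last, partialSum_chainGaps_succ (fun k => (hu.2 k).1),
      Fin.snoc_last]
  · intro l hl
    simp only [Finset.mem_filter, Finset.Nat.mem_antidiagonalTuple] at hl
    rw [← hl.1, chainGaps_partialSum_init]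
  · intro u hu
    simp only [Finset.mem_filter] at hu
    funext j
    rw [Fin.partialSum_init, ← Fin.succ_castSucc, partialSum_chainGaps_succ (fun k => (hu.2 k).1),
      Fin.snoc_castSucc]

theorem seqAt_of_lt {k : ℕ} (u : Fin k → ℕ) {j : ℕ} (h : j < k) : seqAt u j = u ⟨j, h⟩ :=
  dif_pos h

theorem chainGaps_zero {m N : ℕ} (u : Fin (m + 1) → ℕ) : chainGaps N u 0 = u 0 := by
  show Fin.snoc (α := fun _ => ℕ) u N (Fin.castSucc 0) - Fin.cons (α := fun _ => ℕ) 0 u 0 = u 0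
  rw [Fin.snoc_castSucc, Fin.cons_zero, Nat.sub_zero]

theorem chainGaps_succ_castSucc {m N : ℕ} (u : Fin (m + 1) → ℕ) (j : Fin m) :
    chainGaps N u j.castSucc.succ = u j.succ - u j.castSucc := by
  simp only [chainGaps, Fin.cons_succ]
  rw [Fin.succ_castSucc, Fin.snoc_castSucc]

theorem chainGaps_succ_last {m N : ℕ} (u : Fin (m + 1) → ℕ) :
    chainGaps N u (Fin.last m).succ = N - u (Fin.last m) := by
  simp [chainGaps]

theorem chain_cond_iff_forall_chainGaps {p m N : ℕ} (hpN : p ∣ N) {u : Fin (m + 1) → ℕ}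
    (hu : ∀ j, u j < N) :
    ((0 < seqAt u 0 ∧ ¬ p ∣ seqAt u 0) ∧
      (∀ j < m, seqAt u j < seqAt u (j + 1) ∧
        0 < seqAt u (j + 1) - seqAt u j ∧ ¬ p ∣ (seqAt u (j + 1) - seqAt u j)) ∧
      (0 < seqAt u m ∧ ¬ p ∣ seqAt u m)) ↔
    ∀ k, 0 < chainGaps N u k ∧ ¬ p ∣ chainGaps N u k := by
  have hmid : (∀ j < m, seqAt u j < seqAt u (j + 1) ∧
        0 < seqAt u (j + 1) - seqAt u j ∧ ¬ p ∣ (seqAt u (j + 1) - seqAt u j)) ↔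
      ∀ j : Fin m, 0 < chainGaps N u j.castSucc.succ ∧ ¬ p ∣ chainGaps N u j.castSucc.succ := by
    simp only [chainGaps_succ_castSucc]
    refine ⟨fun h j => ?_, fun h j hj => ?_⟩
    · have := h j j.isLt
      rw [seqAt_of_lt u (by omega), seqAt_of_lt u (by omega)] at this
      exact this.2
    · have := h ⟨j, hj⟩
      rw [seqAt_of_lt u (by omega), seqAt_of_lt u (by omega)]
      exact ⟨by simpa using this.1, this⟩
  have hfirst_le_last : (∀ j : Fin m, 0 < chainGaps N u j.castSucc.succ) →
      u 0 ≤ u (Fin.last m) := fun h =>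
    (Fin.strictMono_iff_lt_succ.2 fun j => by
      have := h j
      rw [chainGaps_succ_castSucc] at this
      omega).monotone (Fin.zero_le _)
  rw [show seqAt u 0 = u 0 from dif_pos m.succ_pos,
    show seqAt u m = u (Fin.last m) from dif_pos m.lt_succ_self, hmid, Fin.forall_fin_succ,
    Fin.forall_fin_succ', chainGaps_zero, chainGaps_succ_last, Nat.dvd_sub_iff_right (hu _).le hpN]
  constructor
  · rintro ⟨hfirst, hmid, hl⟩
    exact ⟨hfirst, hmid, Nat.sub_pos_of_lt (hu _), hl.2⟩
  · rintro ⟨hfirst, hmid, hl⟩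
    exact ⟨hfirst, hmid, hfirst.1.trans_le (hfirst_le_last fun j => (hmid j).1), hl.2⟩

theorem stmt0_general (p : ℕ) (n : ℕ) (hn : 2 ≤ n) (N : ℕ)
    (hpN : p ∣ N) :
    Zsum p n N = (n.factorial : ℚ) / N *
      ∑ u ∈ (Fintype.piFinset fun _ : Fin (n - 1) => Finset.range N).filter
          (fun u => (0 < seqAt u 0 ∧ ¬ p ∣ seqAt u 0) ∧
            (∀ j < n - 2, seqAt u j < seqAt u (j + 1) ∧
              0 < seqAt u (j + 1) - seqAt u j ∧ ¬ p ∣ (seqAt u (j + 1) - seqAt u j)) ∧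
            (0 < seqAt u (n - 2) ∧ ¬ p ∣ seqAt u (n - 2))),
        ∏ j, (u j : ℚ)⁻¹ := by
  obtain ⟨m, rfl⟩ : ∃ m, n = m + 1 + 1 := ⟨n - 2, by omega⟩
  simp only [show m + 1 + 1 - 2 = m from rfl]
  set C := (Finset.Nat.antidiagonalTuple (m + 1 + 1) N).filter
    (fun l => ∀ i, 0 < l i ∧ ¬ p ∣ l i) with hC
  have hC_perm : ∀ σ : Perm (Fin (m + 1 + 1)), ∀ l ∈ C, l ∘ σ ∈ C := by
    intro σ l hl
    simp only [C, Finset.mem_filter, Finset.Nat.mem_antidiagonalTuple] at hl ⊢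
    exact ⟨(Equiv.sum_comp σ l).trans hl.1, fun i => hl.2 (σ i)⟩
  rw [Zsum, sum_prod_inv_eq_factorial_div_mul_sum_prod_inv_partialSum_init hC_perm
      (fun l hl i => ((Finset.mem_filter.1 hl).2 i).1)
      (fun l hl => Finset.Nat.mem_antidiagonalTuple.1 (Finset.mem_filter.1 hl).1),
    hC, sum_partialSum_init_eq_sum_chainGaps (fun x => ¬ p ∣ x) (m + 1) N
      (fun u => ∏ j, ((u j : ℕ) : ℚ)⁻¹)]
  congr 2
  exact Finset.filter_congr fun u hu => (chain_cond_iff_forall_chainGaps hpN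
    fun j => Finset.mem_range.1 (Fintype.mem_piFinset.1 hu j)).symm

theorem stmt0 (p : ℕ) (hp : p.Prime) (n : ℕ) (hn : 2 ≤ n) (N : ℕ) (hN : 0 < N)
    (hpN : p ∣ N) :
    Zsum p n N = (n.factorial : ℚ) / N *
      ∑ u ∈ (Fintype.piFinset fun _ : Fin (n - 1) => Finset.range N).filter
          (fun u => (0 < seqAt u 0 ∧ ¬ p ∣ seqAt u 0) ∧
            (∀ j < n - 2, seqAt u j < seqAt u (j + 1) ∧
              0 < seqAt u (j + 1) - seqAt u j ∧ ¬ p ∣ (seqAt u (j + 1) - seqAt u j)) ∧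
            (0 < seqAt u (n - 2) ∧ ¬ p ∣ seqAt u (n - 2))),
        ∏ j, (u j : ℚ)⁻¹ :=
  stmt0_general p n hn N hpN
end

section
/- Let m, n be positive integers with n ≥ 2 and let p be a prime with p > n+1 and p ∤ m. Then R_n^{(m)}(p) ≡ Σ_{a=1}^{n−1} binom(m+n−a−1, n−1) · S_n^{(a)}(p) (mod p). -/
open Finset

attribute [local instance] Classical.propDecidable

/-!
Since `l ≡ l % p (mod p)`, each term `1/(l₁⋯lₙ)` of `R_n^{(m)}(p)` is congruent mod `p` to
`1/(s₁⋯sₙ)` with `sᵢ = lᵢ % p ∈ [1, p-1]`. Writing `lᵢ = sᵢ + p qᵢ`, the residues sum to `a p`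
with `1 ≤ a ≤ n - 1` and the quotients to `m - a`, so each term of `S_n^{(a)}(p)` arises from
exactly `binom(m - a + n - 1, n - 1)` tuples `q`.
-/

theorem Finset.Nat.card_antidiagonalTuple (n N : ℕ) :
    (Finset.Nat.antidiagonalTuple n N).card = (n + N - 1).choose N := by
  rw [← Fintype.card_coe, Fintype.card_congr <|
    (Equiv.subtypeEquivRight fun _ => Finset.Nat.mem_antidiagonalTuple).trans
      (Sym.equivNatSumOfFintype (Fin n) N).symm, Sym.card_sym_eq_choose, Fintype.card_fin]

section PadicNorm

variable {p : ℕ} [Fact p.Prime]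

theorem padicCong_one_iff {x y : ℚ} :
    padicCong p 1 x y ↔ padicNorm p (x - y) ≤ (p : ℚ)⁻¹ := by
  rcases eq_or_ne x y with rfl | hxy
  · simp [padicCong]
  have hp : (1 : ℚ) < p := by exact_mod_cast (Fact.out : p.Prime).one_lt
  rw [padicCong, or_iff_right hxy, padicNorm.eq_zpow_of_nonzero (sub_ne_zero.mpr hxy),
    ← zpow_neg_one, zpow_le_zpow_iff_right₀ hp]
  push_cast
  omega

theorem padicNorm_prod_le_one {ι : Type*} {s : Finset ι} {f : ι → ℚ}
    (hf : ∀ i ∈ s, padicNorm p (f i) ≤ 1) : padicNorm p (∏ i ∈ s, f i) ≤ 1 :=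
  prod_induction f (fun x => padicNorm p x ≤ 1)
    (fun x y hx hy => by rw [padicNorm.mul]; exact mul_le_one₀ hx (padicNorm.nonneg _) hy)
    padicNorm.one.le hf

theorem padicNorm_prod_sub_prod_le {ι : Type*} {s : Finset ι} {f g : ι → ℚ} {t : ℚ}
    (ht : 0 ≤ t) (hf : ∀ i ∈ s, padicNorm p (f i) ≤ 1)
    (hg : ∀ i ∈ s, padicNorm p (g i) ≤ 1)
    (hfg : ∀ i ∈ s, padicNorm p (f i - g i) ≤ t) :
    padicNorm p (∏ i ∈ s, f i - ∏ i ∈ s, g i) ≤ t := by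
  classical
  induction s using Finset.induction_on with
  | empty => simpa using ht
  | insert a s ha ih =>
    simp only [mem_insert, forall_eq_or_imp] at hf hg hfg
    rw [prod_insert ha, prod_insert ha,
      show f a * ∏ i ∈ s, f i - g a * ∏ i ∈ s, g i
        = f a * (∏ i ∈ s, f i - ∏ i ∈ s, g i) + (f a - g a) * ∏ i ∈ s, g i by ring]
    refine padicNorm.nonarchimedean.trans (max_le ?_ ?_) <;> rw [padicNorm.mul]
    · exact (mul_le_of_le_one_left (padicNorm.nonneg _) hf.1).trans (ih hf.2 hg.2 hfg.2)
    · exact (mul_le_of_le_one_right (padicNorm.nonneg _) (padicNorm_prod_le_one hg.2)).trans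
        hfg.1

theorem padicNorm_inv_sub_inv_le {c d : ℕ} (hc : ¬ p ∣ c) (hd : ¬ p ∣ d)
    (hcd : c ≡ d [MOD p]) :
    padicNorm p ((c : ℚ)⁻¹ - (d : ℚ)⁻¹) ≤ (p : ℚ)⁻¹ := by
  have hc0 : (c : ℚ) ≠ 0 := Nat.cast_ne_zero.mpr (by rintro rfl; exact hc (dvd_zero p))
  have hd0 : (d : ℚ) ≠ 0 := Nat.cast_ne_zero.mpr (by rintro rfl; exact hd (dvd_zero p))
  rw [inv_sub_inv hc0 hd0, padicNorm.div, padicNorm.mul, (padicNorm.nat_eq_one_iff c).mpr hc,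
    (padicNorm.nat_eq_one_iff d).mpr hd, mul_one, div_one]
  have hdvd := (padicNorm.dvd_iff_norm_le (p := p) (n := 1)).mp
    (by simpa using Nat.modEq_iff_dvd.mp hcd)
  simpa using hdvd

end PadicNorm

section Residues

variable {p n : ℕ}

def primeToTuples (p n N : ℕ) : Finset (Fin n → ℕ) :=
  (Finset.Nat.antidiagonalTuple n N).filter (fun l => ∀ i, 0 < l i ∧ ¬ p ∣ l i)

theorem pos_and_not_dvd_iff {x : ℕ} : 0 < x ∧ ¬ p ∣ x ↔ ¬ p ∣ x :=
  ⟨And.right, fun h => ⟨Nat.pos_of_ne_zero (by rintro rfl; exact h (dvd_zero p)), h⟩⟩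

theorem mem_primeToTuples {N : ℕ} {l : Fin n → ℕ} :
    l ∈ primeToTuples p n N ↔ ∑ i, l i = N ∧ ∀ i, ¬ p ∣ l i := by
  simp only [primeToTuples, mem_filter, Finset.Nat.mem_antidiagonalTuple, pos_and_not_dvd_iff]

theorem padicCong_Zsum_mod [Fact p.Prime] (N : ℕ) :
    padicCong p 1 (Zsum p n N)
      (∑ l ∈ primeToTuples p n N, ∏ i, ((l i % p : ℕ) : ℚ)⁻¹) := by
  rw [padicCong_one_iff, Zsum, ← primeToTuples, ← sum_sub_distrib]
  refine padicNorm.sum_le' (fun l hl => ?_) (by positivity)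
  have hl := (mem_primeToTuples.mp hl).2
  have hmod : ∀ i, ¬ p ∣ l i % p := fun i => by rw [Nat.dvd_mod_iff dvd_rfl]; exact hl i
  have hinv {c : ℕ} (hc : ¬ p ∣ c) : padicNorm p (c : ℚ)⁻¹ ≤ 1 := by
    rw [← one_div, padicNorm.div, padicNorm.one, (padicNorm.nat_eq_one_iff c).mpr hc, div_one]
  exact padicNorm_prod_sub_prod_le (by positivity) (fun i _ => hinv (hl i))
    (fun i _ => hinv (hmod i))
    (fun i _ => padicNorm_inv_sub_inv_le (hl i) (hmod i) (Nat.mod_modEq _ _).symm)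

def residueTuples (p n a : ℕ) : Finset (Fin n → ℕ) :=
  (Finset.Nat.antidiagonalTuple n (a * p ^ 1)).filter
    (fun l => ∀ i, (0 < l i ∧ ¬ p ∣ l i) ∧ l i < p ^ 1)

theorem Ssum_one_eq (a : ℕ) :
    Ssum p n a 1 = ∑ s ∈ residueTuples p n a, ∏ i, (s i : ℚ)⁻¹ :=
  rfl

theorem mem_residueTuples {a : ℕ} {s : Fin n → ℕ} :
    s ∈ residueTuples p n a ↔ ∑ i, s i = a * p ∧ ∀ i, ¬ p ∣ s i ∧ s i < p := by
  simp only [residueTuples, mem_filter, Finset.Nat.mem_antidiagonalTuple, pos_and_not_dvd_iff,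
    pow_one]

theorem sum_mod_add_mul_sum_div (l : Fin n → ℕ) :
    ∑ i, l i % p + p * ∑ i, l i / p = ∑ i, l i := by
  rw [mul_sum, ← sum_add_distrib]
  exact sum_congr rfl fun i _ => Nat.mod_add_div _ _

theorem dvd_sum_mod {m : ℕ} {l : Fin n → ℕ} (hl : ∑ i, l i = m * p) :
    p ∣ ∑ i, l i % p := by
  rw [Nat.dvd_iff_mod_eq_zero, ← sum_nat_mod, hl, Nat.mul_mod_left]

theorem sum_mod_div_mem_Icc (hp : 0 < p) (hn : 1 ≤ n) {m : ℕ} {l : Fin n → ℕ}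
    (hl : l ∈ primeToTuples p n (m * p)) : (∑ i, l i % p) / p ∈ Icc 1 (n - 1) := by
  obtain ⟨hsum, hl⟩ := mem_primeToTuples.mp hl
  have hmod : ∀ i, 0 < l i % p ∧ l i % p < p := fun i =>
    ⟨Nat.pos_of_ne_zero fun h => hl i (Nat.dvd_of_mod_eq_zero h), Nat.mod_lt _ hp⟩
  have hlow : n ≤ ∑ i, l i % p := by
    simpa using card_nsmul_le_sum univ (fun i => l i % p) 1 fun i _ => (hmod i).1
  have hup : ∑ i, l i % p < n * p := by
    simpa using sum_lt_sum_of_nonempty (univ_nonempty_iff.mpr ⟨⟨0, hn⟩⟩)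
      fun i _ => (hmod i).2
  obtain ⟨a, ha⟩ := dvd_sum_mod hsum
  rw [ha, Nat.mul_div_cancel_left _ hp, mem_Icc]
  rw [ha] at hlow hup
  constructor
  · exact Nat.pos_of_ne_zero (by rintro rfl; omega)
  · have : a < n := Nat.lt_of_mul_lt_mul_left (a := p) (by rwa [mul_comm n] at hup)
    omega

theorem mem_primeToTuples_filter_iff (hp : 0 < p) {m a : ℕ} (ham : a ≤ m) {l : Fin n → ℕ} :
    l ∈ (primeToTuples p n (m * p)).filter (fun l => (∑ i, l i % p) / p = a) ↔
      (fun i => l i % p) ∈ residueTuples p n a ∧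
        (fun i => l i / p) ∈ Finset.Nat.antidiagonalTuple n (m - a) := by
  have hsplit := sum_mod_add_mul_sum_div (p := p) l
  simp only [mem_filter, mem_primeToTuples, mem_residueTuples, Finset.Nat.mem_antidiagonalTuple,
    Nat.dvd_mod_iff dvd_rfl, Nat.mod_lt _ hp, and_true]
  constructor
  · rintro ⟨⟨hsum, hl⟩, rfl⟩
    have hσ := (Nat.div_mul_cancel (dvd_sum_mod hsum)).symm
    refine ⟨⟨hσ, hl⟩, ?_⟩
    have : (∑ i, l i % p) / p + ∑ i, l i / p = m :=
      Nat.eq_of_mul_eq_mul_left hp (by linarith)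
    omega
  · rintro ⟨⟨hσ, hl⟩, hq⟩
    refine ⟨⟨?_, hl⟩, by rw [hσ, Nat.mul_div_cancel _ hp]⟩
    obtain ⟨k, rfl⟩ := Nat.exists_eq_add_of_le ham
    rw [← hsplit, hσ, hq, Nat.add_sub_cancel_left]
    ring

theorem sum_primeToTuples_filter_mod_eq (hp : 0 < p) (hn : 1 ≤ n) {m a : ℕ} (ham : a ≤ m) :
    ∑ l ∈ (primeToTuples p n (m * p)).filter (fun l => (∑ i, l i % p) / p = a),
        ∏ i, ((l i % p : ℕ) : ℚ)⁻¹ =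
      ((m + n - a - 1).choose (n - 1) : ℚ) * Ssum p n a 1 := by
  have hdigits : ∀ x ∈ residueTuples p n a ×ˢ Finset.Nat.antidiagonalTuple n (m - a),
      (fun i => (x.1 i + p * x.2 i) % p) = x.1 ∧ (fun i => (x.1 i + p * x.2 i) / p) = x.2 := by
    intro x hx
    have hlt := fun i => ((mem_residueTuples.mp (mem_product.mp hx).1).2 i).2
    exact ⟨funext fun i => by rw [Nat.add_mul_mod_self_left, Nat.mod_eq_of_lt (hlt i)],
      funext fun i => by rw [Nat.add_mul_div_left _ _ hp, Nat.div_eq_of_lt (hlt i), zero_add]⟩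
  calc _ = ∑ x ∈ residueTuples p n a ×ˢ Finset.Nat.antidiagonalTuple n (m - a),
        ∏ i, (x.1 i : ℚ)⁻¹ := by
        refine sum_nbij' (fun l => (fun i => l i % p, fun i => l i / p))
          (fun x i => x.1 i + p * x.2 i)
          (fun l hl => mem_product.mpr ((mem_primeToTuples_filter_iff hp ham).mp hl))
          (fun x hx => (mem_primeToTuples_filter_iff hp ham).mpr ?_)
          (fun l _ => funext fun i => Nat.mod_add_div _ _)
          (fun x hx => Prod.ext (hdigits x hx).1 (hdigits x hx).2) (fun _ _ => rfl)
        rw [(hdigits x hx).1, (hdigits x hx).2]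
        exact mem_product.mp hx
    _ = _ := by
      simp only [sum_product_right, sum_const]
      rw [← Ssum_one_eq, nsmul_eq_mul,
        Finset.Nat.card_antidiagonalTuple, show n + (m - a) - 1 = (m - a) + (n - 1) by omega,
        Nat.choose_symm_add, show m - a + (n - 1) = m + n - a - 1 by omega]

theorem sum_primeToTuples_mod_eq (hp : 0 < p) (hn : 1 ≤ n) (m : ℕ) :
    ∑ l ∈ primeToTuples p n (m * p), ∏ i, ((l i % p : ℕ) : ℚ)⁻¹ =
      ∑ a ∈ Icc 1 (n - 1), ((m + n - a - 1).choose (n - 1) : ℚ) * Ssum p n a 1 := by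
  rw [← sum_fiberwise_of_maps_to fun l hl => sum_mod_div_mem_Icc hp hn hl]
  refine sum_congr rfl fun a ha => ?_
  rcases le_or_gt a m with ham | hma
  · exact sum_primeToTuples_filter_mod_eq hp hn ham
  · rw [Nat.choose_eq_zero_of_lt (by rw [mem_Icc] at ha; omega), Nat.cast_zero, zero_mul]
    refine sum_eq_zero fun l hl => absurd (mem_filter.mp hl).2 (ne_of_lt ?_)
    have hσ : ∑ i, l i % p ≤ m * p :=
      (mem_primeToTuples.mp (mem_filter.mp hl).1).1 ▸ sum_le_sum fun i _ => Nat.mod_le _ _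
    exact (Nat.div_le_of_le_mul (by rwa [mul_comm])).trans_lt hma

end Residues

theorem stmt2_general (m n : ℕ) (hn : 2 ≤ n)
    (p : ℕ) (hp : p.Prime) :
    padicCong p 1 (Zsum p n (m * p ^ 1))
      (∑ a ∈ Finset.Icc 1 (n - 1), ((m + n - a - 1).choose (n - 1) : ℚ) * Ssum p n a 1) := by
  have : Fact p.Prime := ⟨hp⟩
  rw [pow_one, ← sum_primeToTuples_mod_eq hp.pos (by omega) m]
  exact padicCong_Zsum_mod _

theorem stmt2 (m n : ℕ) (hm : 1 ≤ m) (hn : 2 ≤ n)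
    (p : ℕ) (hp : p.Prime) (hpn : n + 1 < p) (hpm : ¬ p ∣ m) :
    padicCong p 1 (Zsum p n (m * p ^ 1))
      (∑ a ∈ Finset.Icc 1 (n - 1), ((m + n - a - 1).choose (n - 1) : ℚ) * Ssum p n a 1) :=
  stmt2_general m n hn p hp
end
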